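/- Let e₁, …, eₙ be an orthonormal basis of E. The family of 4ⁿ operators (∏_{i∈S} c(e_i)) ∘ (∏_{j∈T} ĉ(e_j)), indexed by pairs of subsets S, T ⊆ {1,…,n} (products taken in increasing order of indices), is linearly independent over ℝ, and hence forms a basis of End(Λ(E)). -/

import Mathlib

/-!
Let `E` be a real inner product space of dimension `n` with orthonormal basis `e₁, …, eₙ`.
The `4ⁿ` operators `(∏_{i∈S} c(e_i)) ∘ (∏_{j∈T} ĉ(e_j))`, indexed by pairs of subsets
`S, T ⊆ {1,…,n}` (products in increasing order of indices), are linearly independent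
over ℝ and span `End(Λ(E))`, hence form a basis of `End(Λ(E))`.
-/

variable {E : Type*} [NormedAddCommGroup E] [InnerProductSpace ℝ E] [FiniteDimensional ℝ E]

/-- Left exterior multiplication by `e` on `Λ(E)`. -/
noncomputable def extOp (e : E) : Module.End ℝ (ExteriorAlgebra ℝ E) :=
  LinearMap.mulLeft ℝ (ExteriorAlgebra.ι ℝ e)

/-- Interior product (contraction) with `e`, i.e. contraction against the covector `⟪e, ·⟫`. -/
noncomputable def intOp (e : E) : Module.End ℝ (ExteriorAlgebra ℝ E) :=
  CliffordAlgebra.contractLeft (Q := (0 : QuadraticForm ℝ E)) ((innerSL ℝ e).toLinearMap)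

/-- The Clifford action `c(e) = ext(e) - ι(e)`. -/
noncomputable def cOp (e : E) : Module.End ℝ (ExteriorAlgebra ℝ E) := extOp e - intOp e

/-- The Clifford action `ĉ(e) = ext(e) + ι(e)`. -/
noncomputable def hcOp (e : E) : Module.End ℝ (ExteriorAlgebra ℝ E) := extOp e + intOp e

/-- The monomial `(∏_{i∈S} c(e_i)) ∘ (∏_{j∈T} ĉ(e_j))`, products in increasing index order. -/
noncomputable def cliffordMonomial {n : ℕ} (b : OrthonormalBasis (Fin n) ℝ E)
    (ST : Finset (Fin n) × Finset (Fin n)) : Module.End ℝ (ExteriorAlgebra ℝ E) :=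
  ((ST.1.sort (· ≤ ·)).map fun i => cOp (b i)).prod *
    ((ST.2.sort (· ≤ ·)).map fun j => hcOp (b j)).prod

set_option linter.unusedSectionVars false

lemma extOp_mul_extOp (e e' : E) : extOp e * extOp e' + extOp e' * extOp e = 0 := by
  refine LinearMap.ext fun x => ?_
  simp only [extOp, LinearMap.add_apply, Module.End.mul_apply, LinearMap.mulLeft_apply,
    LinearMap.zero_apply, ← mul_assoc, ← add_mul]
  rw [ExteriorAlgebra.ι_add_mul_swap, zero_mul]

lemma intOp_mul_intOp (e e' : E) : intOp e * intOp e' + intOp e' * intOp e = 0 := by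
  refine LinearMap.ext fun x => ?_
  simp only [intOp, LinearMap.add_apply, Module.End.mul_apply, LinearMap.zero_apply]
  rw [CliffordAlgebra.contractLeft_comm]
  simp

lemma intOp_mul_extOp (e e' : E) :
    intOp e * extOp e' + extOp e' * intOp e = (inner ℝ e e' : ℝ) • 1 := by
  refine LinearMap.ext fun x => ?_
  simp only [intOp, extOp, LinearMap.add_apply, Module.End.mul_apply, LinearMap.mulLeft_apply,
    LinearMap.smul_apply, Module.End.one_apply]
  rw [CliffordAlgebra.contractLeft_ι_mul]
  simp

set_option linter.unusedSectionVars false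

lemma extOp_sq (e : E) : extOp e * extOp e = 0 := by
  refine LinearMap.ext fun x => ?_
  show ExteriorAlgebra.ι ℝ e * (ExteriorAlgebra.ι ℝ e * x) = 0
  rw [← mul_assoc, ExteriorAlgebra.ι_sq_zero, zero_mul]

lemma intOp_sq (e : E) : intOp e * intOp e = 0 := by
  refine LinearMap.ext fun x => ?_
  simp only [intOp, Module.End.mul_apply, LinearMap.zero_apply]
  exact CliffordAlgebra.contractLeft_contractLeft (Q := (0 : QuadraticForm ℝ E)) (d := (innerSL ℝ e).toLinearMap) x

lemma cOp_hcOp_anticomm (e e' : E) : cOp e * hcOp e' = -(hcOp e' * cOp e) := by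
  have h : cOp e * hcOp e' + hcOp e' * cOp e =
      (extOp e * extOp e' + extOp e' * extOp e) - (intOp e * intOp e' + intOp e' * intOp e)
      + (intOp e' * extOp e + extOp e * intOp e')
      - (intOp e * extOp e' + extOp e' * intOp e) := by
    simp only [cOp, hcOp, sub_mul, mul_sub, add_mul, mul_add]; abel
  rw [intOp_mul_extOp, intOp_mul_extOp, extOp_mul_extOp, intOp_mul_intOp,
    real_inner_comm e' e] at h
  have h2 : cOp e * hcOp e' + hcOp e' * cOp e = 0 := by rw [h]; abel
  exact eq_neg_of_add_eq_zero_left h2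

lemma cOp_sq (e : E) : cOp e * cOp e = -((inner ℝ e e : ℝ) • 1) := by
  have h : cOp e * cOp e =
      extOp e * extOp e + intOp e * intOp e - (intOp e * extOp e + extOp e * intOp e) := by
    simp only [cOp, sub_mul, mul_sub, add_mul, mul_add]; abel
  rw [h, extOp_sq, intOp_sq, intOp_mul_extOp]; abel

lemma hcOp_sq (e : E) : hcOp e * hcOp e = (inner ℝ e e : ℝ) • 1 := by
  have h : hcOp e * hcOp e =
      extOp e * extOp e + intOp e * intOp e + (intOp e * extOp e + extOp e * intOp e) := by
    simp only [hcOp]; noncomm_ring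
  rw [h, extOp_sq, intOp_sq, intOp_mul_extOp]; abel

lemma cOp_anticomm {e e' : E} (h0 : (inner ℝ e e' : ℝ) = 0) :
    cOp e * cOp e' = -(cOp e' * cOp e) := by
  have h : cOp e * cOp e' + cOp e' * cOp e =
      (extOp e * extOp e' + extOp e' * extOp e) + (intOp e * intOp e' + intOp e' * intOp e)
      - (intOp e' * extOp e + extOp e * intOp e')
      - (intOp e * extOp e' + extOp e' * intOp e) := by
    simp only [cOp, sub_mul, mul_sub, add_mul, mul_add]; abel
  rw [intOp_mul_extOp, intOp_mul_extOp, extOp_mul_extOp, intOp_mul_intOp] at h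
  have h0' : (inner ℝ e' e : ℝ) = 0 := by rw [real_inner_comm]; exact h0
  simp only [h0, h0', zero_smul] at h
  refine eq_neg_of_add_eq_zero_left ?_
  rw [h]; abel

lemma hcOp_anticomm {e e' : E} (h0 : (inner ℝ e e' : ℝ) = 0) :
    hcOp e * hcOp e' = -(hcOp e' * hcOp e) := by
  have h : hcOp e * hcOp e' + hcOp e' * hcOp e =
      (extOp e * extOp e' + extOp e' * extOp e) + (intOp e * intOp e' + intOp e' * intOp e)
      + (intOp e' * extOp e + extOp e * intOp e')
      + (intOp e * extOp e' + extOp e' * intOp e) := by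
    simp only [hcOp]; noncomm_ring
  rw [intOp_mul_extOp, intOp_mul_extOp, extOp_mul_extOp, intOp_mul_intOp] at h
  have h0' : (inner ℝ e' e : ℝ) = 0 := by rw [real_inner_comm]; exact h0
  simp only [h0, h0', zero_smul] at h
  refine eq_neg_of_add_eq_zero_left ?_
  rw [h]; abel

lemma conj_list {ι : Type*} {A : Type*} [Ring A] [Algebra ℝ A] (x : A) (g : ι → A)
    (σ : ι → ℝ) (l : List ι) (h : ∀ c ∈ l, x * g c = σ c • (g c * x)) :
    x * (l.map g).prod = (l.map σ).prod • ((l.map g).prod * x) := by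
  induction l with
  | nil => simp
  | cons a t ih =>
    have ha := h a (List.mem_cons_self)
    have ht := ih (fun c hc => h c (List.mem_cons_of_mem a hc))
    simp only [List.map_cons, List.prod_cons]
    rw [← mul_assoc, ha, smul_mul_assoc, mul_assoc, ht, mul_smul_comm, smul_smul, ← mul_assoc]

lemma sort_map_prod {n : ℕ} (S : Finset (Fin n)) (σ : Fin n → ℝ) :
    ((S.sort (· ≤ ·)).map σ).prod = ∏ j ∈ S, σ j := by
  have hperm : List.Perm ((S.sort (· ≤ ·)).map σ) (S.toList.map σ) :=
    (Finset.sort_perm_toList S _).map σ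
  rw [hperm.prod_eq, Finset.prod_map_toList]

lemma prod_ite_sign {n : ℕ} (S : Finset (Fin n)) (i : Fin n) :
    (∏ j ∈ S, if j = i then (1:ℝ) else -1) = (-1 : ℝ) ^ (S.erase i).card := by
  by_cases hi : i ∈ S
  · rw [← Finset.mul_prod_erase S _ hi, if_pos rfl, one_mul]
    rw [Finset.prod_congr rfl (fun j hj => if_neg (Finset.ne_of_mem_erase hj)),
      Finset.prod_const]
  · rw [Finset.erase_eq_of_notMem hi,
      Finset.prod_congr rfl (fun j hj => if_neg (fun hji : j = i => hi (hji ▸ hj))),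
      Finset.prod_const]

variable {n : ℕ} (b : OrthonormalBasis (Fin n) ℝ E)

lemma b_inner (i j : Fin n) : (inner ℝ (b i) (b j) : ℝ) = if i = j then 1 else 0 :=
  (orthonormal_iff_ite.mp b.orthonormal) i j

lemma cOp_mul_monomial (i : Fin n) (U : Finset (Fin n) × Finset (Fin n)) :
    cOp (b i) * cliffordMonomial b U =
      ((-1:ℝ) ^ ((U.1.erase i).card + U.2.card)) • (cliffordMonomial b U * cOp (b i)) := by
  have h1 := conj_list (cOp (b i)) (fun j => cOp (b j)) (fun j => if j = i then 1 else -1)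
    (U.1.sort (· ≤ ·)) (fun c _ => by
      show cOp (b i) * cOp (b c) = (if c = i then (1:ℝ) else -1) • (cOp (b c) * cOp (b i))
      by_cases hc : c = i
      · simp [hc]
      · have h0 : (inner ℝ (b i) (b c) : ℝ) = 0 := by
          rw [b_inner]; exact if_neg (fun h => hc h.symm)
        rw [if_neg hc, cOp_anticomm h0]; exact (neg_one_smul ℝ _).symm)
  have h2 := conj_list (cOp (b i)) (fun j => hcOp (b j)) (fun _ => (-1:ℝ))
    (U.2.sort (· ≤ ·)) (fun c _ => by
      show cOp (b i) * hcOp (b c) = (-1:ℝ) • (hcOp (b c) * cOp (b i))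
      rw [cOp_hcOp_anticomm]; exact (neg_one_smul ℝ _).symm)
  rw [sort_map_prod, prod_ite_sign] at h1
  rw [sort_map_prod, Finset.prod_const] at h2
  rw [cliffordMonomial, ← mul_assoc, h1, smul_mul_assoc, mul_assoc, h2, mul_smul_comm,
    smul_smul, ← pow_add, ← mul_assoc]

lemma hcOp_mul_monomial (i : Fin n) (U : Finset (Fin n) × Finset (Fin n)) :
    hcOp (b i) * cliffordMonomial b U =
      ((-1:ℝ) ^ (U.1.card + (U.2.erase i).card)) • (cliffordMonomial b U * hcOp (b i)) := by
  have h1 := conj_list (hcOp (b i)) (fun j => cOp (b j)) (fun _ => (-1:ℝ))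
    (U.1.sort (· ≤ ·)) (fun c _ => by
      show hcOp (b i) * cOp (b c) = (-1:ℝ) • (cOp (b c) * hcOp (b i))
      rw [cOp_hcOp_anticomm (b c) (b i)]; module)
  have h2 := conj_list (hcOp (b i)) (fun j => hcOp (b j)) (fun j => if j = i then 1 else -1)
    (U.2.sort (· ≤ ·)) (fun c _ => by
      show hcOp (b i) * hcOp (b c) = (if c = i then (1:ℝ) else -1) • (hcOp (b c) * hcOp (b i))
      by_cases hc : c = i
      · simp [hc]
      · have h0 : (inner ℝ (b i) (b c) : ℝ) = 0 := by
          rw [b_inner]; exact if_neg (fun h => hc h.symm)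
        rw [if_neg hc, hcOp_anticomm h0]; exact (neg_one_smul ℝ _).symm)
  rw [sort_map_prod, Finset.prod_const] at h1
  rw [sort_map_prod, prod_ite_sign] at h2
  rw [cliffordMonomial, ← mul_assoc, h1, smul_mul_assoc, mul_assoc, h2, mul_smul_comm,
    smul_smul, ← pow_add, ← mul_assoc]

lemma cOp_conj_monomial (i : Fin n) (U : Finset (Fin n) × Finset (Fin n)) :
    cOp (b i) * cliffordMonomial b U * cOp (b i) =
      ((-1:ℝ) ^ ((U.1.erase i).card + U.2.card + 1)) • cliffordMonomial b U := by
  rw [cOp_mul_monomial, smul_mul_assoc, mul_assoc, cOp_sq, b_inner, if_pos rfl, one_smul,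
    show cliffordMonomial b U * -1 = -cliffordMonomial b U from mul_neg_one (cliffordMonomial b U), pow_succ]; module

lemma hcOp_conj_monomial (i : Fin n) (U : Finset (Fin n) × Finset (Fin n)) :
    hcOp (b i) * cliffordMonomial b U * hcOp (b i) =
      ((-1:ℝ) ^ (U.1.card + (U.2.erase i).card)) • cliffordMonomial b U := by
  rw [hcOp_mul_monomial, smul_mul_assoc, mul_assoc, hcOp_sq, b_inner, if_pos rfl, one_smul,
    mul_one]


def signP {n : ℕ} (U : Finset (Fin n) × Finset (Fin n)) : ℤ := (-1) ^ (U.1.card + U.2.card)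

def sgn {n : ℕ} (U : Finset (Fin n) × Finset (Fin n)) : Fin n ⊕ Fin n → ℤ :=
  Sum.elim (fun i => if i ∈ U.1 then signP U else -signP U)
           (fun i => if i ∈ U.2 then -signP U else signP U)

lemma sgn_unit {n : ℕ} (U : Finset (Fin n) × Finset (Fin n)) (a : Fin n ⊕ Fin n) :
    sgn U a = 1 ∨ sgn U a = -1 := by
  have hs : signP U = 1 ∨ signP U = -1 := by
    rcases Nat.even_or_odd (U.1.card + U.2.card) with h | h
    · exact Or.inl (Even.neg_one_pow h)
    · exact Or.inr (Odd.neg_one_pow h)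
  rcases a with i | i <;> simp only [sgn, Sum.elim_inl, Sum.elim_inr] <;>
    split <;> omega

lemma sgn_inl {n : ℕ} (U : Finset (Fin n) × Finset (Fin n)) (i : Fin n) :
    ((-1:ℝ) ^ ((U.1.erase i).card + U.2.card + 1)) = ((sgn U (Sum.inl i) : ℤ) : ℝ) := by
  simp only [sgn, Sum.elim_inl, signP]
  by_cases hi : i ∈ U.1
  · rw [if_pos hi, Finset.card_erase_of_mem hi]
    have h1 : 1 ≤ U.1.card := Finset.one_le_card.mpr ⟨i, hi⟩
    have : U.1.card - 1 + U.2.card + 1 = U.1.card + U.2.card := by omega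
    rw [this]; push_cast; ring
  · rw [if_neg hi, Finset.erase_eq_of_notMem hi]
    push_cast; ring

lemma sgn_inr {n : ℕ} (U : Finset (Fin n) × Finset (Fin n)) (i : Fin n) :
    ((-1:ℝ) ^ (U.1.card + (U.2.erase i).card)) = ((sgn U (Sum.inr i) : ℤ) : ℝ) := by
  simp only [sgn, Sum.elim_inr, signP]
  by_cases hi : i ∈ U.2
  · rw [if_pos hi, Finset.card_erase_of_mem hi]
    have h1 : 1 ≤ U.2.card := Finset.one_le_card.mpr ⟨i, hi⟩
    have : U.1.card + U.2.card = (U.1.card + (U.2.card - 1)) + 1 := by omega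
    rw [this]; push_cast; ring
  · rw [if_neg hi, Finset.erase_eq_of_notMem hi]
    push_cast; ring

def muZ {n : ℕ} (U : Finset (Fin n) × Finset (Fin n)) : ℤ :=
  ∑ i : Fin n, sgn U (Sum.inl i) * 3 ^ (i : ℕ) +
    ∑ i : Fin n, sgn U (Sum.inr i) * 3 ^ (n + (i : ℕ))

noncomputable def conjOp : Module.End ℝ (Module.End ℝ (ExteriorAlgebra ℝ E)) :=
  ∑ i : Fin n, ((3:ℝ) ^ (i : ℕ)) •
      (LinearMap.mulLeft ℝ (cOp (b i)) ∘ₗ LinearMap.mulRight ℝ (cOp (b i))) +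
    ∑ i : Fin n, ((3:ℝ) ^ (n + (i : ℕ))) •
      (LinearMap.mulLeft ℝ (hcOp (b i)) ∘ₗ LinearMap.mulRight ℝ (hcOp (b i)))

lemma conjOp_apply_monomial (U : Finset (Fin n) × Finset (Fin n)) :
    conjOp b (cliffordMonomial b U) = ((muZ U : ℤ) : ℝ) • cliffordMonomial b U := by
  have t1 : ∀ i : Fin n,
      cOp (b i) * (cliffordMonomial b U * cOp (b i)) =
        ((sgn U (Sum.inl i) : ℤ) : ℝ) • cliffordMonomial b U := fun i => by
    rw [← mul_assoc, cOp_conj_monomial, sgn_inl]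
  have t2 : ∀ i : Fin n,
      hcOp (b i) * (cliffordMonomial b U * hcOp (b i)) =
        ((sgn U (Sum.inr i) : ℤ) : ℝ) • cliffordMonomial b U := fun i => by
    rw [← mul_assoc, hcOp_conj_monomial, sgn_inr]
  simp only [conjOp, LinearMap.add_apply, LinearMap.sum_apply, LinearMap.smul_apply,
    LinearMap.comp_apply, LinearMap.mulLeft_apply, LinearMap.mulRight_apply]
  simp only [t1, t2, smul_smul, muZ]
  push_cast
  rw [add_smul, Finset.sum_smul, Finset.sum_smul]
  congr 1 <;> exact Finset.sum_congr rfl (fun i _ => by ring_nf)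

lemma signSum_inj : ∀ (N : ℕ) (ε ε' : ℕ → ℤ), (∀ i, ε i = 1 ∨ ε i = -1) →
    (∀ i, ε' i = 1 ∨ ε' i = -1) →
    (∑ i ∈ Finset.range N, ε i * 3 ^ i) = (∑ i ∈ Finset.range N, ε' i * 3 ^ i) →
    ∀ i < N, ε i = ε' i := by
  intro N
  induction N with
  | zero => intro ε ε' _ _ _ i hi; omega
  | succ N ih =>
    intro ε ε' hε hε' hsum i hi
    rw [Finset.sum_range_succ', Finset.sum_range_succ'] at hsum
    have key : ∀ δ : ℕ → ℤ, ∑ j ∈ Finset.range N, δ (j + 1) * 3 ^ (j + 1) =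
        3 * ∑ j ∈ Finset.range N, δ (j + 1) * 3 ^ j := by
      intro δ
      rw [Finset.mul_sum]
      exact Finset.sum_congr rfl fun j _ => by ring
    rw [key ε, key ε'] at hsum
    have h0 : ε 0 = ε' 0 := by
      have h1 := hε 0
      have h2 := hε' 0
      omega
    have hrest : (∑ j ∈ Finset.range N, ε (j + 1) * 3 ^ j) =
        ∑ j ∈ Finset.range N, ε' (j + 1) * 3 ^ j := by
      simp only [pow_zero, mul_one] at hsum
      omega
    rcases Nat.eq_zero_or_pos i with rfl | hpos
    · exact h0
    · obtain ⟨j, rfl⟩ : ∃ j, i = j + 1 := ⟨i - 1, by omega⟩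
      exact ih (fun k => ε (k + 1)) (fun k => ε' (k + 1)) (fun k => hε _) (fun k => hε' _)
        hrest j (by omega)

def epsF {n : ℕ} (W : Finset (Fin n) × Finset (Fin n)) : ℕ → ℤ :=
  fun k => if hk : k < n + n then sgn W (finSumFinEquiv.symm ⟨k, hk⟩) else 1

lemma muZ_eq_sum {n : ℕ} (W : Finset (Fin n) × Finset (Fin n)) :
    muZ W = ∑ k ∈ Finset.range (n + n), epsF W k * 3 ^ k := by
  rw [Finset.sum_range_add]
  unfold muZ
  congr 1
  · rw [← Fin.sum_univ_eq_sum_range (fun k => epsF W k * 3 ^ k) n]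
    refine Finset.sum_congr rfl fun i _ => ?_
    unfold epsF
    rw [dif_pos (show (i:ℕ) < n + n by omega)]
    congr 2
    symm
    rw [Equiv.symm_apply_eq, finSumFinEquiv_apply_left]
    exact Fin.ext rfl
  · rw [← Fin.sum_univ_eq_sum_range (fun k => epsF W (n + k) * 3 ^ (n + k)) n]
    refine Finset.sum_congr rfl fun i _ => ?_
    unfold epsF
    rw [dif_pos (show n + (i:ℕ) < n + n by omega)]
    congr 2
    symm
    rw [Equiv.symm_apply_eq, finSumFinEquiv_apply_right]
    exact Fin.ext rfl

lemma sgn_eq_of_muZ_eq {n : ℕ} {U V : Finset (Fin n) × Finset (Fin n)} (h : muZ U = muZ V) :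
    ∀ a, sgn U a = sgn V a := by
  intro a
  rw [muZ_eq_sum, muZ_eq_sum] at h
  have key := signSum_inj (n + n) (epsF U) (epsF V)
    (fun k => by unfold epsF; split; exacts [sgn_unit U _, Or.inl rfl])
    (fun k => by unfold epsF; split; exacts [sgn_unit V _, Or.inl rfl]) h
  have hk : ((finSumFinEquiv a : Fin (n + n)) : ℕ) < n + n := Fin.is_lt _
  have hv := key _ hk
  unfold epsF at hv
  rw [dif_pos hk, dif_pos hk] at hv
  simpa using hv

lemma neg_one_pow_eq_of_even_add {a b : ℕ} (h : Even (a + b)) :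
    ((-1:ℤ) ^ a = (-1:ℤ) ^ b) := by
  have hiff := Nat.even_add.mp h
  rcases Nat.even_or_odd a with ha | ha
  · rw [ha.neg_one_pow, (hiff.mp ha).neg_one_pow]
  · have hb : Odd b := by
      rcases Nat.even_or_odd b with hb | hb
      · exact absurd (hiff.mpr hb) (Nat.not_even_iff_odd.mpr ha)
      · exact hb
    rw [ha.neg_one_pow, hb.neg_one_pow]

lemma muZ_inj {n : ℕ} : Function.Injective (muZ (n := n)) := by
  intro U V h
  have hs := sgn_eq_of_muZ_eq h
  have hP : signP U = 1 ∨ signP U = -1 := by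
    rcases Nat.even_or_odd (U.1.card + U.2.card) with h' | h'
    · exact Or.inl (Even.neg_one_pow h')
    · exact Or.inr (Odd.neg_one_pow h')
  have hPV : signP V = 1 ∨ signP V = -1 := by
    rcases Nat.even_or_odd (V.1.card + V.2.card) with h' | h'
    · exact Or.inl (Even.neg_one_pow h')
    · exact Or.inr (Odd.neg_one_pow h')
  by_cases hPP : signP U = signP V
  · have h1 : U.1 = V.1 := by
      ext i
      have hthis := hs (Sum.inl i)
      simp only [sgn, Sum.elim_inl] at hthis
      by_cases hU : i ∈ U.1 <;> by_cases hV : i ∈ V.1 <;>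
          simp only [hU, hV, if_true, if_false, ite_true, ite_false] at hthis <;>
        first
          | exact iff_of_true hU hV
          | exact iff_of_false hU hV
          | omega
    have h2 : U.2 = V.2 := by
      ext i
      have hthis := hs (Sum.inr i)
      simp only [sgn, Sum.elim_inr] at hthis
      by_cases hU : i ∈ U.2 <;> by_cases hV : i ∈ V.2 <;>
          simp only [hU, hV, if_true, if_false, ite_true, ite_false] at hthis <;>
        first
          | exact iff_of_true hU hV
          | exact iff_of_false hU hV
          | omega
    exact Prod.ext h1 h2
  · exfalso
    have h1 : V.1 = U.1ᶜ := by
      ext i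
      have hthis := hs (Sum.inl i)
      simp only [sgn, Sum.elim_inl] at hthis
      simp only [Finset.mem_compl]
      by_cases hU : i ∈ U.1 <;> by_cases hV : i ∈ V.1 <;>
          simp only [hU, hV, if_true, if_false, ite_true, ite_false] at hthis <;>
        first
          | exact iff_of_true hV hU
          | exact iff_of_false hV (fun hc => hc hU)
          | exact iff_of_false hV (not_not_intro hU)
          | exact iff_of_true hV (fun hc => hU hc)
          | omega
    have h2 : V.2 = U.2ᶜ := by
      ext i
      have hthis := hs (Sum.inr i)
      simp only [sgn, Sum.elim_inr] at hthis
      simp only [Finset.mem_compl]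
      by_cases hU : i ∈ U.2 <;> by_cases hV : i ∈ V.2 <;>
          simp only [hU, hV, if_true, if_false, ite_true, ite_false] at hthis <;>
        first
          | exact iff_of_true hV hU
          | exact iff_of_false hV (fun hc => hc hU)
          | exact iff_of_false hV (not_not_intro hU)
          | exact iff_of_true hV (fun hc => hU hc)
          | omega
    have hle1 : U.1.card ≤ n := by simpa using Finset.card_le_card (Finset.subset_univ U.1)
    have hle2 : U.2.card ≤ n := by simpa using Finset.card_le_card (Finset.subset_univ U.2)
    have hc1 : V.1.card = n - U.1.card := by
      rw [h1, Finset.card_compl, Fintype.card_fin]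
    have hc2 : V.2.card = n - U.2.card := by
      rw [h2, Finset.card_compl, Fintype.card_fin]
    have heven : Even ((U.1.card + U.2.card) + (V.1.card + V.2.card)) := by
      rw [hc1, hc2, Nat.even_iff]; omega
    have : signP U = signP V := neg_one_pow_eq_of_even_add heven
    omega

lemma isUnit_cOp (e : E) (he : (inner ℝ e e : ℝ) = 1) : IsUnit (cOp e) :=
  ⟨⟨cOp e, -cOp e, by rw [show cOp e * -cOp e = -(cOp e * cOp e) from mul_neg (cOp e) (cOp e), cOp_sq, he, one_smul, neg_neg],
    by rw [show -cOp e * cOp e = -(cOp e * cOp e) from neg_mul (cOp e) (cOp e), cOp_sq, he, one_smul, neg_neg]⟩, rfl⟩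

lemma isUnit_hcOp (e : E) (he : (inner ℝ e e : ℝ) = 1) : IsUnit (hcOp e) :=
  ⟨⟨hcOp e, hcOp e, by rw [hcOp_sq, he, one_smul], by rw [hcOp_sq, he, one_smul]⟩, rfl⟩

lemma isUnit_cliffordMonomial (U : Finset (Fin n) × Finset (Fin n)) :
    IsUnit (cliffordMonomial b U) := by
  refine IsUnit.mul (List.prod_isUnit ?_) (List.prod_isUnit ?_)
  · intro m hm
    obtain ⟨j, _, rfl⟩ := List.mem_map.mp hm
    exact isUnit_cOp (b j) (by rw [b_inner, if_pos rfl])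
  · intro m hm
    obtain ⟨j, _, rfl⟩ := List.mem_map.mp hm
    exact isUnit_hcOp (b j) (by rw [b_inner, if_pos rfl])

lemma cliffordMonomial_ne_zero (U : Finset (Fin n) × Finset (Fin n)) :
    cliffordMonomial b U ≠ 0 :=
  (isUnit_cliffordMonomial b U).ne_zero

lemma cliffordMonomial_linearIndependent :
    LinearIndependent ℝ (cliffordMonomial b) :=
  Module.End.eigenvectors_linearIndependent' (conjOp b) (fun U => ((muZ U : ℤ) : ℝ))
    (fun U V h => muZ_inj (Int.cast_injective (α := ℝ) (by simpa using h))) _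
    (fun U => ⟨Module.End.mem_eigenspace_iff.mpr (conjOp_apply_monomial b U),
      cliffordMonomial_ne_zero b U⟩)

noncomputable def lamMon (S : Finset (Fin n)) : ExteriorAlgebra ℝ E :=
  ((S.sort (· ≤ ·)).map fun i => ExteriorAlgebra.ι ℝ (b i)).prod

lemma lamMon_empty : lamMon b (∅ : Finset (Fin n)) = 1 := by
  simp [lamMon]

lemma lamMon_singleton (i : Fin n) : lamMon b {i} = ExteriorAlgebra.ι ℝ (b i) := by
  simp [lamMon]

lemma lamMon_insert_of_lt {S : Finset (Fin n)} {i : Fin n} (h1 : ∀ c ∈ S, i ≤ c)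
    (h2 : i ∉ S) : lamMon b (insert i S) = ExteriorAlgebra.ι ℝ (b i) * lamMon b S := by
  unfold lamMon
  rw [Finset.sort_insert _ h1 h2, List.map_cons, List.prod_cons]

lemma ι_mul_lamMon_step : ∀ (m : ℕ) (S : Finset (Fin n)), S.card = m → ∀ i : Fin n,
    ∃ (z : ℝ) (V : Finset (Fin n)), V ⊆ insert i S ∧
      ExteriorAlgebra.ι ℝ (b i) * lamMon b S = z • lamMon b V := by
  intro m
  induction m using Nat.strong_induction_on with
  | _ m ih =>
    intro S hcard i
    rcases Finset.eq_empty_or_nonempty S with rfl | hS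
    · exact ⟨1, {i}, by simp, by rw [lamMon_empty, mul_one, lamMon_singleton, one_smul]⟩
    · set j := S.min' hS with hj
      have hjS : j ∈ S := S.min'_mem hS
      have hSsplit : S = insert j (S.erase j) := (Finset.insert_erase hjS).symm
      have hjnotin : j ∉ S.erase j := Finset.notMem_erase j S
      have hjle : ∀ c ∈ S.erase j, j ≤ c := fun c hc =>
        S.min'_le c (Finset.mem_of_mem_erase hc)
      have hdecomp : lamMon b S = ExteriorAlgebra.ι ℝ (b j) * lamMon b (S.erase j) := by
        conv_lhs => rw [hSsplit]
        exact lamMon_insert_of_lt b hjle hjnotin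
      rcases lt_trichotomy i j with hij | hij | hij
      · refine ⟨1, insert i S, Finset.Subset.refl _, ?_⟩
        rw [one_smul, lamMon_insert_of_lt b (fun c hc => le_of_lt (lt_of_lt_of_le hij
          (S.min'_le c hc))) (fun hc => absurd (S.min'_le i hc) (not_le.mpr hij))]
      · refine ⟨0, ∅, Finset.empty_subset _, ?_⟩
        rw [hdecomp, ← mul_assoc, hij, ExteriorAlgebra.ι_sq_zero, zero_mul, zero_smul]
      · have hcard' : (S.erase j).card < m := by
          rw [← hcard]
          exact Finset.card_erase_lt_of_mem hjS
        obtain ⟨z, V, hVsub, hzV⟩ := ih _ hcard' (S.erase j) rfl i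
        have hjV : ∀ c ∈ V, j ≤ c := by
          intro c hc
          rcases Finset.mem_insert.mp (hVsub hc) with rfl | hc'
          · exact le_of_lt hij
          · exact hjle c hc'
        have hjnotV : j ∉ V := by
          intro hc
          rcases Finset.mem_insert.mp (hVsub hc) with h' | h'
          · exact absurd h' (ne_of_lt hij)
          · exact hjnotin h'
        refine ⟨-z, insert j V, ?_, ?_⟩
        · intro x hx
          rcases Finset.mem_insert.mp hx with rfl | hx'
          · exact Finset.mem_insert_of_mem hjS
          · rcases Finset.mem_insert.mp (hVsub hx') with rfl | hx''
            · exact Finset.mem_insert_self x S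
            · exact Finset.mem_insert_of_mem (Finset.mem_of_mem_erase hx'')
        · rw [hdecomp, ← mul_assoc,
            eq_neg_of_add_eq_zero_left (ExteriorAlgebra.ι_add_mul_swap (b i) (b j)),
            neg_mul, mul_assoc, hzV, mul_smul_comm, lamMon_insert_of_lt b hjV hjnotV,
            neg_smul]

lemma ι_mul_mem_span {x : ExteriorAlgebra ℝ E} (i : Fin n)
    (hx : x ∈ Submodule.span ℝ (Set.range (lamMon b))) :
    ExteriorAlgebra.ι ℝ (b i) * x ∈ Submodule.span ℝ (Set.range (lamMon b)) := by
  induction hx using Submodule.span_induction with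
  | mem x hxm =>
    obtain ⟨S, rfl⟩ := hxm
    obtain ⟨z, V, _, hzV⟩ := ι_mul_lamMon_step b S.card S rfl i
    rw [hzV]
    exact Submodule.smul_mem _ _ (Submodule.subset_span ⟨V, rfl⟩)
  | zero => rw [mul_zero]; exact Submodule.zero_mem _
  | add x y _ _ hx hy => rw [mul_add]; exact Submodule.add_mem _ hx hy
  | smul r x _ hx => rw [mul_smul_comm]; exact Submodule.smul_mem _ _ hx

lemma list_prod_mul_mem_span (l : List (Fin n)) {x : ExteriorAlgebra ℝ E}
    (hx : x ∈ Submodule.span ℝ (Set.range (lamMon b))) :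
    (l.map fun i => ExteriorAlgebra.ι ℝ (b i)).prod * x ∈
      Submodule.span ℝ (Set.range (lamMon b)) := by
  induction l with
  | nil => simpa using hx
  | cons a t ih =>
    rw [List.map_cons, List.prod_cons, mul_assoc]
    exact ι_mul_mem_span b a ih

lemma mul_mem_span {x y : ExteriorAlgebra ℝ E}
    (hx : x ∈ Submodule.span ℝ (Set.range (lamMon b)))
    (hy : y ∈ Submodule.span ℝ (Set.range (lamMon b))) :
    x * y ∈ Submodule.span ℝ (Set.range (lamMon b)) := by
  induction hx using Submodule.span_induction with
  | mem x hxm =>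
    obtain ⟨S, rfl⟩ := hxm
    exact list_prod_mul_mem_span b _ hy
  | zero => rw [zero_mul]; exact Submodule.zero_mem _
  | add x x' _ _ h1 h2 => rw [add_mul]; exact Submodule.add_mem _ h1 h2
  | smul r x _ h1 => rw [smul_mul_assoc]; exact Submodule.smul_mem _ _ h1

lemma lamMon_span_top : Submodule.span ℝ (Set.range (lamMon b)) = ⊤ := by
  rw [eq_top_iff]
  rintro x -
  induction x using ExteriorAlgebra.induction with
  | algebraMap r =>
    rw [Algebra.algebraMap_eq_smul_one]
    exact Submodule.smul_mem _ _ (Submodule.subset_span ⟨∅, lamMon_empty b⟩)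
  | ι m =>
    have hm : m = ∑ i : Fin n, (inner ℝ (b i) m : ℝ) • b i := (b.sum_repr' m).symm
    rw [hm, map_sum]
    refine Submodule.sum_mem _ fun i _ => ?_
    rw [map_smul]
    exact Submodule.smul_mem _ _ (Submodule.subset_span ⟨{i}, lamMon_singleton b i⟩)
  | mul x y hx hy => exact mul_mem_span b hx hy
  | add x y hx hy => exact Submodule.add_mem _ hx hy

include b in
lemma exterior_finiteDimensional : FiniteDimensional ℝ (ExteriorAlgebra ℝ E) :=
  ⟨by rw [← lamMon_span_top b]; exact Submodule.fg_span (Set.finite_range _)⟩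

include b in
lemma exterior_finrank_le : Module.finrank ℝ (ExteriorAlgebra ℝ E) ≤ 2 ^ n := by
  classical
  haveI : Fintype (Set.range (lamMon b)) := Set.fintypeRange _
  have h1 : Module.finrank ℝ (ExteriorAlgebra ℝ E) =
      Module.finrank ℝ (Submodule.span ℝ (Set.range (lamMon b))) := by
    rw [lamMon_span_top b, finrank_top]
  rw [h1]
  refine (finrank_span_le_card _).trans ?_
  rw [Set.toFinset_card]
  exact (Fintype.card_range_le _).trans (by simp [Fintype.card_finset, Fintype.card_fin])

theorem cliffordMonomial_linearIndependent_and_basis' :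
    LinearIndependent ℝ (cliffordMonomial b) ∧
      Submodule.span ℝ (Set.range (cliffordMonomial b)) = ⊤ := by
  have hli := cliffordMonomial_linearIndependent b
  refine ⟨hli, ?_⟩
  haveI := exterior_finiteDimensional b
  have hcard : Fintype.card (Finset (Fin n) × Finset (Fin n)) = 2 ^ n * 2 ^ n := by
    simp [Fintype.card_finset, Fintype.card_fin]
  have hEnd : Module.finrank ℝ (Module.End ℝ (ExteriorAlgebra ℝ E)) =
      Module.finrank ℝ (ExteriorAlgebra ℝ E) * Module.finrank ℝ (ExteriorAlgebra ℝ E) :=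
    Module.finrank_linearMap ℝ ℝ _ _
  have hub := hli.fintype_card_le_finrank
  rw [hcard, hEnd] at hub
  have hle := exterior_finrank_le b
  have hd : Module.finrank ℝ (ExteriorAlgebra ℝ E) = 2 ^ n := by
    refine le_antisymm hle ?_
    by_contra hlt
    push_neg at hlt
    exact absurd hub (not_le.mpr (Nat.mul_lt_mul'' hlt hlt))
  exact hli.span_eq_top_of_card_eq_finrank (by rw [hcard, hEnd, hd])

theorem cliffordMonomial_linearIndependent_and_basis {n : ℕ}
    (b : OrthonormalBasis (Fin n) ℝ E) :
    LinearIndependent ℝ (cliffordMonomial b) ∧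
      Submodule.span ℝ (Set.range (cliffordMonomial b)) = ⊤ :=
  cliffordMonomial_linearIndependent_and_basis' b
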